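/- Let β_c = √(2 log 2) and let F : (0,∞) → ℝ be defined by F(β) = β²/2 if β ≤ β_c and F(β) = β β_c − log 2 if β > β_c. Then the function β ↦ F(√β) is concave on (0,∞). -/

import Mathlib

/-!
Writing `b = β²`, the map `b ↦ F(√b)` is the lower envelope of the affine functions
`b ↦ b / (2s) + (s - 1) log 2` over `s ≥ 1`: the bound is AM-GM, and the minimum is attained at
`s = max 1 (√b / β_c)`. A minimum of affine functions that is attained everywhere is concave.
-/

open Set Real

theorem ConcaveOn.of_le_of_exists_eq {𝕜 E β ι : Type*} [Semiring 𝕜] [PartialOrder 𝕜]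
    [AddCommMonoid E] [AddCommMonoid β] [PartialOrder β] [IsOrderedAddMonoid β]
    [SMul 𝕜 E] [Module 𝕜 β] [PosSMulMono 𝕜 β] {s : Set E} {f : E → β} {φ : ι → E → β}
    {I : Set ι} (hs : Convex 𝕜 s) (hφ : ∀ i ∈ I, ConcaveOn 𝕜 s (φ i))
    (hle : ∀ i ∈ I, ∀ x ∈ s, f x ≤ φ i x) (heq : ∀ x ∈ s, ∃ i ∈ I, f x = φ i x) :
    ConcaveOn 𝕜 s f := by
  refine ⟨hs, fun x hx y hy a b ha hb hab => ?_⟩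
  obtain ⟨i, hi, hfi⟩ := heq _ (hs hx hy ha hb hab)
  calc a • f x + b • f y ≤ a • φ i x + b • φ i y := by
        gcongr
        exacts [hle i hi x hx, hle i hi y hy]
    _ ≤ φ i (a • x + b • y) := (hφ i hi).2 hx hy ha hb hab
    _ = f (a • x + b • y) := hfi.symm

/-- `c` plays the role of `log 2`, so that `√(2c)` is the critical inverse temperature. -/
noncomputable def remFreeEnergy (c β : ℝ) : ℝ :=
  if β ≤ √(2 * c) then β ^ 2 / 2 else β * √(2 * c) - c

section

variable {c : ℝ}

theorem remFreeEnergy_le (hc : 0 ≤ c) {s β : ℝ} (hs : 1 ≤ s) (hβ : 0 ≤ β) :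
    remFreeEnergy c β ≤ β ^ 2 / (2 * s) + (s - 1) * c := by
  have hs0 : 0 < s := by linarith
  unfold remFreeEnergy
  split_ifs with h
  · have hβs : β ^ 2 / s ≤ 2 * c := calc
      β ^ 2 / s ≤ β ^ 2 := div_le_self (sq_nonneg β) hs
      _ ≤ √(2 * c) ^ 2 := pow_le_pow_left₀ hβ h 2
      _ = 2 * c := sq_sqrt (by linarith)
    have hgap : β ^ 2 / (2 * s) + (s - 1) * c - β ^ 2 / 2
        = (s - 1) * (2 * c - β ^ 2 / s) / 2 := by
      field_simp
      ring
    have hs1 : 0 ≤ s - 1 := by linarith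
    have hβs_sub : 0 ≤ 2 * c - β ^ 2 / s := by linarith
    rw [← sub_nonneg, hgap]
    positivity
  · have hsq : √(2 * c) ^ 2 = 2 * c := sq_sqrt (by linarith)
    have hgap : β ^ 2 / (2 * s) + (s - 1) * c - (β * √(2 * c) - c)
        = (β - s * √(2 * c)) ^ 2 / (2 * s) := by
      field_simp
      linear_combination (-s ^ 2) * hsq
    rw [← sub_nonneg, hgap]
    positivity

theorem exists_remFreeEnergy_eq (hc : 0 < c) (β : ℝ) :
    ∃ s ≥ 1, remFreeEnergy c β = β ^ 2 / (2 * s) + (s - 1) * c := by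
  unfold remFreeEnergy
  split_ifs with h
  · exact ⟨1, le_rfl, by ring⟩
  · have hβc : 0 < √(2 * c) := sqrt_pos.2 (by linarith)
    have hsq : √(2 * c) ^ 2 = 2 * c := sq_sqrt (by linarith)
    refine ⟨β / √(2 * c), (one_le_div hβc).2 (not_le.1 h).le, ?_⟩
    field_simp
    linear_combination β * hsq

theorem concaveOn_remFreeEnergy_sqrt (hc : 0 < c) :
    ConcaveOn ℝ (Ici 0) (fun b => remFreeEnergy c √b) := by
  refine ConcaveOn.of_le_of_exists_eq (convex_Ici 0) (I := Ici 1)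
    (φ := fun s b => (2 * s)⁻¹ • b + (s - 1) * c) ?_ ?_ ?_
  · intro s hs
    have hs0 : (0 : ℝ) ≤ (2 * s)⁻¹ := inv_nonneg.2 (by linarith [mem_Ici.1 hs])
    exact ((concaveOn_id (convex_Ici 0)).smul hs0).add_const _
  · intro s hs b hb
    simpa only [smul_eq_mul, ← div_eq_inv_mul, sq_sqrt hb]
      using remFreeEnergy_le hc.le hs (sqrt_nonneg b)
  · intro b hb
    obtain ⟨s, hs, heq⟩ := exists_remFreeEnergy_eq hc √b
    refine ⟨s, hs, ?_⟩
    simpa only [smul_eq_mul, ← div_eq_inv_mul, sq_sqrt hb] using heq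

end

/-- The limiting free energy of the random energy model is concave as a function of
the squared temperature: `β ↦ F(√β)` is concave on `(0, ∞)`. -/
theorem REM_free_energy_concave_in_squared_temperature
    (F : ℝ → ℝ)
    (hF1 : ∀ β : ℝ, 0 < β → β ≤ Real.sqrt (2 * Real.log 2) → F β = β ^ 2 / 2)
    (hF2 : ∀ β : ℝ, Real.sqrt (2 * Real.log 2) < β →
      F β = β * Real.sqrt (2 * Real.log 2) - Real.log 2) :
    ConcaveOn ℝ (Set.Ioi (0 : ℝ)) (fun b => F (Real.sqrt b)) := by
  have hF : EqOn (fun b => remFreeEnergy (log 2) √b) (fun b => F √b) (Ioi 0) := by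
    intro b hb
    simp only [remFreeEnergy]
    split_ifs with h
    exacts [(hF1 _ (sqrt_pos.2 hb) h).symm, (hF2 _ (not_le.1 h)).symm]
  exact ((concaveOn_remFreeEnergy_sqrt (log_pos one_lt_two)).subset Ioi_subset_Ici_self
    (convex_Ioi 0)).congr hF
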